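/- Let N_1,...,N_d be n×n Hermitian matrices with N_1+...+N_d = I_n and each N_i ⪰ 0. If for each j = 1,...,d the matrix ∑_{i≠j} N_i has nontrivial kernel, then there is a unitary U with U*N_iU = diag(E_ii, Ñ_i) with Ñ_i ⪰ 0, where E_ii are d×d matrix units. -/

import Mathlib

/-!
For each `j` pick `v_j ≠ 0` with `(∑_{i ≠ j} N_i) v_j = 0`. The quadratic forms `⟪v_j, N_i v_j⟫`
are nonnegative with sum zero, so `N_i v_j = 0` for `i ≠ j`, and then `∑ N_i = 1` gives
`N_j v_j = v_j`. Thus `v_i` and `v_j` are eigenvectors of the Hermitian `N_j` for the eigenvalues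
`0` and `1`, hence orthogonal. Completing the normalized `v_j` to an orthonormal basis gives a
unitary `U` for which the first `d` columns of `U* N_i U` are those of `E_ii ⊕ 0`; as `U* N_i U`
is Hermitian, its off-diagonal blocks vanish, and its lower-right block is positive semidefinite.
-/

open ComplexOrder Matrix BigOperators

namespace Matrix

theorem IsHermitian.eq_fromBlocks_of_toBlocks₂₁_eq_zero {α m n : Type*} [AddMonoid α]
    [StarAddMonoid α] {M : Matrix (m ⊕ n) (m ⊕ n) α} (hM : M.IsHermitian)
    (h : M.toBlocks₂₁ = 0) : M = Matrix.fromBlocks M.toBlocks₁₁ 0 0 M.toBlocks₂₂ := by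
  have h₁₂ := (isHermitian_fromBlocks_iff.mp ((fromBlocks_toBlocks M).symm ▸ hM)).2.2.1
  rw [h, conjTranspose_zero] at h₁₂
  conv_lhs => rw [← fromBlocks_toBlocks M, h, ← h₁₂]

variable {ι n 𝕜 : Type*} [Fintype n] [RCLike 𝕜]

theorem PosSemidef.mulVec_eq_zero_of_sum_mulVec_eq_zero {s : Finset ι} {N : ι → Matrix n n 𝕜}
    (hN : ∀ i ∈ s, (N i).PosSemidef) {v : n → 𝕜} (hv : (∑ i ∈ s, N i) *ᵥ v = 0) :
    ∀ i ∈ s, N i *ᵥ v = 0 := by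
  have hquad : ∑ i ∈ s, star v ⬝ᵥ N i *ᵥ v = 0 := by
    rw [← dotProduct_sum, ← sum_mulVec, hv, dotProduct_zero]
  intro i hi
  rw [← (hN i hi).dotProduct_mulVec_zero_iff]
  exact (Finset.sum_eq_zero_iff_of_nonneg fun j hj => (hN j hj).dotProduct_mulVec_nonneg v).mp
    hquad i hi

theorem PosSemidef.mulVec_eq_ite_of_sum_erase_mulVec_eq_zero [DecidableEq n] [Fintype ι]
    [DecidableEq ι] {N : ι → Matrix n n 𝕜} (hN : ∀ i, (N i).PosSemidef) (hsum : ∑ i, N i = 1)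
    {j : ι} {v : n → 𝕜} (hv : (∑ i ∈ Finset.univ.erase j, N i) *ᵥ v = 0) (i : ι) :
    N i *ᵥ v = if i = j then v else 0 := by
  split_ifs with hij
  · subst hij
    calc N i *ᵥ v = (∑ k, N k) *ᵥ v := by
          rw [← Finset.add_sum_erase _ _ (Finset.mem_univ i), add_mulVec, hv, add_zero]
      _ = v := by rw [hsum, one_mulVec]
  · exact mulVec_eq_zero_of_sum_mulVec_eq_zero (fun i _ => hN i) hv i
      (Finset.mem_erase.mpr ⟨hij, Finset.mem_univ i⟩)

theorem IsHermitian.dotProduct_eq_zero_of_mulVec_eq_self_of_mulVec_eq_zero {A : Matrix n n 𝕜}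
    (hA : A.IsHermitian) {x y : n → 𝕜} (hx : A *ᵥ x = x) (hy : A *ᵥ y = 0) :
    star y ⬝ᵥ x = 0 := by
  rw [← hx, dotProduct_mulVec, ← hA.eq, ← star_mulVec, hy, star_zero, zero_dotProduct]

theorem star_mul_mul_mulVec_of_mulVec_eq_smul [DecidableEq n] {U A : Matrix n n 𝕜}
    (hU : U ∈ unitaryGroup n 𝕜) {x : n → 𝕜} {c : 𝕜} (h : A *ᵥ (U *ᵥ x) = c • U *ᵥ x) :
    (star U * A * U) *ᵥ x = c • x := by
  rw [← mulVec_mulVec, ← mulVec_mulVec, h, mulVec_smul, mulVec_mulVec,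
    (mem_unitaryGroup_iff').mp hU, one_mulVec]

theorem IsHermitian.eq_fromBlocks_single_of_mulVec_single_inl {α m : Type*} [Fintype m]
    [DecidableEq m] [DecidableEq n] [Semiring α] [StarRing α] {M : Matrix (m ⊕ n) (m ⊕ n) α}
    (hM : M.IsHermitian) (i : m)
    (h : ∀ j, M *ᵥ Pi.single (Sum.inl j) 1 = if i = j then Pi.single (Sum.inl j) 1 else 0) :
    M = Matrix.fromBlocks (single i i 1) 0 0 M.toBlocks₂₂ := by
  have hentry (a : m ⊕ n) (j : m) :
      M a (Sum.inl j) = if i = j then (Pi.single (Sum.inl j) 1 : m ⊕ n → α) a else 0 := by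
    rw [← col_apply M (Sum.inl j), ← mulVec_single_one, h]
    split_ifs <;> rfl
  rw [hM.eq_fromBlocks_of_toBlocks₂₁_eq_zero]
  · congr 1
    ext a j
    rw [toBlocks₁₁, of_apply, hentry, single_apply, Pi.single_apply]
    grind
  · ext a j
    simp [toBlocks₂₁, hentry]

theorem exists_mem_unitaryGroup_mulVec_single_inl {κ : Type*} [Fintype ι] [Fintype κ]
    [DecidableEq ι] [DecidableEq κ] {u : ι → EuclideanSpace 𝕜 (ι ⊕ κ)} (hu : Orthonormal 𝕜 u) :
    ∃ U ∈ unitaryGroup (ι ⊕ κ) 𝕜, ∀ i, U *ᵥ Pi.single (Sum.inl i) 1 = u i := by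
  have hu' : Orthonormal 𝕜
      ((Set.range Sum.inl).domRestrict (Sum.elim u (0 : κ → EuclideanSpace 𝕜 (ι ⊕ κ)))) := by
    convert hu.comp _ (Equiv.ofInjective _ Sum.inl_injective).symm.injective using 1
    ext1 ⟨_, i, rfl⟩
    simp
  obtain ⟨b, hb⟩ := hu'.exists_orthonormalBasis_extension_of_card_eq finrank_euclideanSpace
  refine ⟨(EuclideanSpace.basisFun _ 𝕜).toBasis.toMatrix b.toBasis,
    (EuclideanSpace.basisFun _ 𝕜).toMatrix_orthonormalBasis_mem_unitary b, fun i => ?_⟩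
  rw [mulVec_single_one]
  exact congrArg WithLp.ofLp (hb _ (Set.mem_range_self i))

end Matrix

theorem orthonormal_inv_norm_smul {𝕜 E ι : Type*} [RCLike 𝕜] [NormedAddCommGroup E]
    [InnerProductSpace 𝕜 E] {v : ι → E} (hv : ∀ i, v i ≠ 0)
    (horth : Pairwise fun i j => inner 𝕜 (v i) (v j) = 0) :
    Orthonormal 𝕜 fun i => (‖v i‖⁻¹ : 𝕜) • v i :=
  ⟨fun i => norm_smul_inv_norm (hv i), fun i j hij => by
    simp only [inner_smul_left, inner_smul_right, horth hij, mul_zero]⟩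

theorem stmt2 (d m : ℕ) (N : Fin d → Matrix (Fin d ⊕ Fin m) (Fin d ⊕ Fin m) ℂ)
    (hpsd : ∀ i, (N i).PosSemidef) (hSum : ∑ i, N i = 1)
    (hker : ∀ j, ∃ v : Fin d ⊕ Fin m → ℂ, v ≠ 0 ∧
      (∑ i ∈ Finset.univ.erase j, N i).mulVec v = 0) :
    ∃ U ∈ Matrix.unitaryGroup (Fin d ⊕ Fin m) ℂ,
      ∃ Nt : Fin d → Matrix (Fin m) (Fin m) ℂ,
        (∀ i, (Nt i).PosSemidef) ∧
        ∀ i, star U * N i * U =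
          Matrix.fromBlocks (Matrix.single i i 1) 0 0 (Nt i) := by
  choose v hv0 hv using hker
  have heig (i j : Fin d) : N i *ᵥ v j = if i = j then v j else 0 :=
    PosSemidef.mulVec_eq_ite_of_sum_erase_mulVec_eq_zero hpsd hSum (hv j) i
  set x : Fin d → EuclideanSpace ℂ (Fin d ⊕ Fin m) := fun j => WithLp.toLp 2 (v j)
  have horth : Pairwise fun i j => inner ℂ (x i) (x j) = 0 := fun i j hij => by
    change inner ℂ (WithLp.toLp 2 (v i)) (WithLp.toLp 2 (v j)) = 0
    rw [EuclideanSpace.inner_toLp_toLp, dotProduct_comm]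
    exact (hpsd j).isHermitian.dotProduct_eq_zero_of_mulVec_eq_self_of_mulVec_eq_zero
      (by simpa using heig j j) (by simpa [Ne.symm hij] using heig j i)
  have hx0 (j : Fin d) : x j ≠ 0 := fun h => hv0 j (congrArg WithLp.ofLp h)
  obtain ⟨U, hU, hUcol⟩ :=
    exists_mem_unitaryGroup_mulVec_single_inl (orthonormal_inv_norm_smul hx0 horth)
  have hcol (i j : Fin d) : (star U * N i * U) *ᵥ Pi.single (Sum.inl j) 1 =
      if i = j then Pi.single (Sum.inl j) 1 else 0 := by
    rw [star_mul_mul_mulVec_of_mulVec_eq_smul hU (c := if i = j then 1 else 0) (by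
      rw [hUcol, WithLp.ofLp_smul, mulVec_smul, heig]
      split_ifs <;> simp [x])]
    split_ifs <;> simp
  have hNU (i : Fin d) : (star U * N i * U).PosSemidef := (hpsd i).conjTranspose_mul_mul_same U
  exact ⟨U, hU, fun i => (star U * N i * U).toBlocks₂₂, fun i => (hNU i).submatrix _,
    fun i => (hNU i).isHermitian.eq_fromBlocks_single_of_mulVec_single_inl i (hcol i)⟩
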